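/- arXiv:0812.2458 — 3 statements merged into one kernel-verified Lean document; each statement's English description precedes it below -/
import Mathlib

section
/- For the matrix G_a defined recursively, the set N_i of column indices of the non-zero entries in row i (0-indexed, indices identified with binary vectors in F_2^a) equals {i} ∪ {i ⊕ 2^j : j = 0,...,a-1}, where ⊕ denotes bitwise XOR. -/
/-- The recursive Alamouti-type complex orthogonal design `G_a`.
`Gmat a i j` is the `(i,j)` entry of the `2^a × 2^a` design (indices `< 2^a` are
meaningful), viewed as a function of the complex variables `x 0, …, x a`.
The base case `a = 0` is the `1×1` matrix `[x 0]`, and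
`G_{a+1} = [[G_a, -x_{a+1}* I],[x_{a+1} I, G_a^H]]`. -/
noncomputable def Gmat : ℕ → ℕ → ℕ → ((ℕ → ℂ) → ℂ)
  | 0, i, j => if i = 0 ∧ j = 0 then (fun x => x 0) else 0
  | (a+1), i, j =>
      if i < 2 ^ a then
        if j < 2 ^ a then Gmat a i j
        else if j = i + 2 ^ a then (fun x => -(starRingEnd ℂ) (x (a+1))) else 0
      else
        if j < 2 ^ a then (if i = j + 2 ^ a then (fun x => x (a+1)) else 0)
        else fun x => (starRingEnd ℂ) (Gmat a (j - 2 ^ a) (i - 2 ^ a) x)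


/-! The entry `(i, j)` of `G_{a+1}` lies in one of four blocks according to bit `a` of `i` and
of `j`. In the diagonal blocks it is an entry of `G_a` or of `G_a^H`, and the support of `G_a`
depends only on `i ⊕ j`, which is symmetric; in the off-diagonal blocks it is non-zero exactly
when `i ⊕ j = 2^a`. By induction, `G_a i j ≠ 0` iff `i ⊕ j` is `0` or some `2^k` with `k < a`. -/

theorem Nat.xor_two_pow_of_lt {x n : ℕ} (h : x < 2 ^ n) : x ^^^ 2 ^ n = x + 2 ^ n := by
  rw [← Nat.or_two_pow_eq_add_of_lt h]
  refine Nat.eq_of_testBit_eq fun k => ?_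
  have := Nat.testBit_lt_two_pow h
  grind

theorem Nat.xor_add_two_pow {x y n : ℕ} (hx : x < 2 ^ n) (hy : y < 2 ^ n) :
    x ^^^ (y + 2 ^ n) = (x ^^^ y) + 2 ^ n := by
  rw [← Nat.xor_two_pow_of_lt hy, ← Nat.xor_two_pow_of_lt (Nat.xor_lt_two_pow hx hy),
    Nat.xor_assoc]

theorem Nat.add_two_pow_xor_add_two_pow {x y n : ℕ} (hx : x < 2 ^ n) (hy : y < 2 ^ n) :
    (x + 2 ^ n) ^^^ (y + 2 ^ n) = x ^^^ y := by
  rw [← Nat.xor_two_pow_of_lt hx, ← Nat.xor_two_pow_of_lt hy, Nat.xor_comm y,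
    ← Nat.xor_assoc, Nat.xor_xor_cancel_right]

def ZeroOrTwoPowLt (a d : ℕ) : Prop := d = 0 ∨ ∃ k < a, d = 2 ^ k

theorem zeroOrTwoPowLt_succ_iff_of_lt {a d : ℕ} (hd : d < 2 ^ a) :
    ZeroOrTwoPowLt (a + 1) d ↔ ZeroOrTwoPowLt a d := by
  refine or_congr_right ⟨fun ⟨k, hk, hdk⟩ => ⟨k, ?_, hdk⟩, fun ⟨k, hk, hdk⟩ => ⟨k, by omega, hdk⟩⟩
  rcases Nat.lt_succ_iff_lt_or_eq.mp hk with hk | rfl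
  · exact hk
  · exact absurd hdk hd.ne

theorem zeroOrTwoPowLt_succ_add_two_pow_iff {a d : ℕ} (hd : d < 2 ^ a) :
    ZeroOrTwoPowLt (a + 1) (d + 2 ^ a) ↔ d = 0 := by
  refine ⟨fun h => ?_, fun h => Or.inr ⟨a, a.lt_succ_self, by rw [h, zero_add]⟩⟩
  obtain h | ⟨k, hk, hdk⟩ := h
  · have := Nat.two_pow_pos a; omega
  · rcases Nat.lt_succ_iff_lt_or_eq.mp hk with hk | rfl
    · have := Nat.pow_lt_pow_right Nat.one_lt_two hk; omega
    · omega

theorem conj_comp_ne_zero_iff {α : Type*} {f : α → ℂ} :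
    (fun x => starRingEnd ℂ (f x)) ≠ 0 ↔ f ≠ 0 := by
  simp only [ne_eq, funext_iff, Pi.zero_apply, map_eq_zero]

theorem Gmat_ne_zero_iff {a i j : ℕ} (hi : i < 2 ^ a) (hj : j < 2 ^ a) :
    Gmat a i j ≠ 0 ↔ ZeroOrTwoPowLt a (i ^^^ j) := by
  induction a generalizing i j with
  | zero =>
    obtain ⟨rfl, rfl⟩ : i = 0 ∧ j = 0 := by simp_all
    simpa [Gmat, ZeroOrTwoPowLt] using fun h => by simpa using congrFun h (fun _ => 1)
  | succ a ih =>
    rw [pow_succ, mul_two] at hi hj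
    by_cases hi' : i < 2 ^ a <;> by_cases hj' : j < 2 ^ a
    · simp only [Gmat, if_pos hi', if_pos hj']
      rw [ih hi' hj', zeroOrTwoPowLt_succ_iff_of_lt (Nat.xor_lt_two_pow hi' hj')]
    · obtain ⟨j, rfl⟩ := Nat.exists_eq_add_of_le' (not_lt.mp hj')
      replace hj : j < 2 ^ a := by omega
      rw [Nat.xor_add_two_pow hi' hj, zeroOrTwoPowLt_succ_add_two_pow_iff
        (Nat.xor_lt_two_pow hi' hj), Nat.xor_eq_zero_iff]
      simp only [Gmat, if_pos hi', if_neg hj', add_left_inj]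
      split_ifs with hji
      · simpa [hji] using fun h => by simpa using congrFun h (fun _ => 1)
      · simpa [eq_comm] using hji
    · obtain ⟨i, rfl⟩ := Nat.exists_eq_add_of_le' (not_lt.mp hi')
      replace hi : i < 2 ^ a := by omega
      rw [Nat.xor_comm, Nat.xor_add_two_pow hj' hi, zeroOrTwoPowLt_succ_add_two_pow_iff
        (Nat.xor_lt_two_pow hj' hi), Nat.xor_eq_zero_iff]
      simp only [Gmat, if_neg hi', if_pos hj', add_left_inj]
      split_ifs with hij
      · simpa [hij] using fun h => by simpa using congrFun h (fun _ => 1)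
      · simpa [eq_comm] using hij
    · obtain ⟨i, rfl⟩ := Nat.exists_eq_add_of_le' (not_lt.mp hi')
      obtain ⟨j, rfl⟩ := Nat.exists_eq_add_of_le' (not_lt.mp hj')
      replace hi : i < 2 ^ a := by omega
      replace hj : j < 2 ^ a := by omega
      simp only [Gmat, if_neg hi', if_neg hj', Nat.add_sub_cancel]
      rw [conj_comp_ne_zero_iff, ih hj hi, Nat.add_two_pow_xor_add_two_pow hi hj,
        zeroOrTwoPowLt_succ_iff_of_lt (Nat.xor_lt_two_pow hi hj), Nat.xor_comm]

theorem zeroOrTwoPowLt_xor_iff {a i j : ℕ} :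
    ZeroOrTwoPowLt a (i ^^^ j) ↔ j = i ∨ ∃ k < a, j = i ^^^ 2 ^ k := by
  simp only [ZeroOrTwoPowLt, xor_eq_iff_right_eq, Nat.xor_zero]

theorem lt_two_pow_of_eq_or_eq_xor_two_pow {a i j : ℕ} (hi : i < 2 ^ a)
    (h : j = i ∨ ∃ k < a, j = i ^^^ 2 ^ k) : j < 2 ^ a := by
  obtain rfl | ⟨k, hk, rfl⟩ := h
  · exact hi
  · exact Nat.xor_lt_two_pow hi (Nat.pow_lt_pow_right Nat.one_lt_two hk)

theorem row_support_Gmat_general (a : ℕ) (i : ℕ) (hi : i < 2 ^ a) :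
    {j : ℕ | j < 2 ^ a ∧ Gmat a i j ≠ 0} =
      ({i} : Set ℕ) ∪ {y : ℕ | ∃ k < a, y = i ^^^ 2 ^ k} := by
  ext j
  simp only [Set.mem_ofPred_eq, Set.mem_union, Set.mem_singleton_iff]
  constructor
  · rintro ⟨hj, hG⟩
    exact zeroOrTwoPowLt_xor_iff.mp ((Gmat_ne_zero_iff hi hj).mp hG)
  · intro h
    have hj := lt_two_pow_of_eq_or_eq_xor_two_pow hi h
    exact ⟨hj, (Gmat_ne_zero_iff hi hj).mpr (zeroOrTwoPowLt_xor_iff.mpr h)⟩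

/-- the set of column indices of the non-zero entries in row `i` of
`G_a` is `{i} ∪ {i ⊕ 2^k : k = 0,…,a-1}`, where `⊕` is bitwise XOR. -/
theorem row_support_Gmat (a : ℕ) (ha : 1 ≤ a) (i : ℕ) (hi : i < 2 ^ a) :
    {j : ℕ | j < 2 ^ a ∧ Gmat a i j ≠ 0} =
      ({i} : Set ℕ) ∪ {y : ℕ | ∃ k < a, y = i ^^^ 2 ^ k} :=
  row_support_Gmat_general a i hi
end

section
/- With a ≥ 2, b = ⌊log_2 a⌋ + 1, M_a = {x : 0 < x ≤ a, x not a power of 2}, g as above, H_a = g(M_a) \ M_a, J_a = M_a \ g(M_a), and m = 2^b - a - 1: if J_a ≠ ∅ then |J_a| = |H_a| = ⌈(m-1)/2⌉. -/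
open scoped Classical

noncomputable section

/-- `b = ⌊log₂ a⌋ + 1`. -/
def bb (a : ℕ) : ℕ := Nat.log 2 a + 1

/-- `m = 2^b - a - 1`. -/
def mm (a : ℕ) : ℕ := 2 ^ bb a - a - 1

/-- `q = a - 2^(b-1)`. -/
def qq (a : ℕ) : ℕ := a - 2 ^ (bb a - 1)

/-- `M_a = {x : 0 < x ≤ a, x is not a power of 2}`. -/
def Ma (a : ℕ) : Set ℕ := {x | 0 < x ∧ x ≤ a ∧ ¬ ∃ k, x = 2 ^ k}

/-- `g(x) = 2x` if bit `b-1` of `x` is `0`, else `g(x) = 2x + 1 - 2^b`. -/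
def gg (a x : ℕ) : ℕ := if x.testBit (bb a - 1) then 2 * x + 1 - 2 ^ bb a else 2 * x

/-- `f'(x) = x` if `x ∈ M_a`, else `f'(x) = x + 1 - 2⌈m/2⌉` (intended domain `g(M_a)`). -/
def ff' (a x : ℕ) : ℕ := if x ∈ Ma a then x else x + 1 - 2 * ((mm a + 1) / 2)

/-- `f = f' ∘ g`. -/
def ff (a x : ℕ) : ℕ := ff' a (gg a x)

/-- the `j`-th binary digit of `x`, as a natural number. -/
def bitv (x j : ℕ) : ℕ := if x.testBit j then 1 else 0

/-- `h(x) = 2^(f(x)-1) + Σ_{j=0}^{b-2} x_j 2^(2^(j+1)-1) + x_{b-1}`. -/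
def hh (a x : ℕ) : ℕ :=
  2 ^ (ff a x - 1) + (∑ j ∈ Finset.range (bb a - 1), bitv x j * 2 ^ (2 ^ (j + 1) - 1)) +
    bitv x (bb a - 1)

/-- Hamming weight of `x` viewed as a vector in `F_2^a`. -/
def wt (a x : ℕ) : ℕ := ((Finset.range a).filter (fun j => x.testBit j)).card

/-- identification of `Z_{2^a}` with `F_2^a` via radix-2 representation. -/
def toVec (a x : ℕ) : Fin a → ZMod 2 := fun j => if x.testBit (j : ℕ) then 1 else 0

/-- `S`, the `F_2`-span of `M_a' = h(M_a)` inside `F_2^a`. -/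
def Ssub (a : ℕ) : Submodule (ZMod 2) (Fin a → ZMod 2) :=
  Submodule.span (ZMod 2) (toVec a '' (hh a '' Ma a))

/-- `P_a = {0, 2^0, 2^1, …, 2^(a-1)}`. -/
def Pa (a : ℕ) : Set ℕ := {0} ∪ {y | ∃ j < a, y = 2 ^ j}

/-- `Q_a = ∅` if `a+1` is a power of `2`, else `{1 ⊕ 2^j : a-m ≤ j ≤ a-1}`. -/
def Qa (a : ℕ) : Set ℕ :=
  if ∃ k, a + 1 = 2 ^ k then ∅ else {y | ∃ j, a - mm a ≤ j ∧ j < a ∧ y = 1 ^^^ 2 ^ j}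

/-- `T_a = P_a ∪ Q_a`. -/
def Ta (a : ℕ) : Set ℕ := Pa a ∪ Qa a

end

/-!
On `[0, 2^b)` the map `g` is the cyclic left shift of `b`-bit words, so it is injective and
`M_a`, `g(M_a)` have the same size; hence `|J_a| = |H_a|`. Writing `N = 2^(b-1) ≤ a < 2N`, an
`x ∈ M_a` with `N ≤ x` is sent to the odd number `2(x - N) + 1 ≤ x`, which is not `1` because
`x ≠ N`, so it stays in `M_a`. An `x < N` is sent to `2x`, which leaves `M_a` exactly when
`2x > a`. Thus `H_a = 2 · (a/2, N)`, of size `N - ⌊a/2⌋ - 1 = ⌈(m-1)/2⌉`.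
-/

theorem Nat.testBit_iff_two_pow_le {x n : ℕ} (hx : x < 2 ^ (n + 1)) :
    x.testBit n ↔ 2 ^ n ≤ x :=
  ⟨Nat.ge_two_pow_of_testBit, fun h => Nat.testBit_of_two_pow_le_and_two_pow_add_one_gt h hx⟩

theorem Nat.not_exists_eq_two_pow_of_lt_of_lt {x n : ℕ} (h₁ : 2 ^ n < 2 * x) (h₂ : x < 2 ^ n) :
    ¬∃ k, x = 2 ^ k := by
  rintro ⟨k, rfl⟩
  rw [← pow_succ', Nat.pow_lt_pow_iff_right (by norm_num)] at h₁
  rw [Nat.pow_lt_pow_iff_right (by norm_num)] at h₂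
  omega

theorem Nat.exists_two_mul_eq_two_pow_iff {x : ℕ} : (∃ k, 2 * x = 2 ^ k) ↔ ∃ k, x = 2 ^ k := by
  refine ⟨fun ⟨k, hk⟩ => ?_, fun ⟨k, hk⟩ => ⟨k + 1, by rw [hk, pow_succ']⟩⟩
  rcases k with _ | k
  · omega
  · exact ⟨k, by rw [pow_succ'] at hk; omega⟩

theorem Nat.lt_two_mul_two_pow_log (a : ℕ) : a < 2 * 2 ^ Nat.log 2 a := by
  simpa [pow_succ'] using Nat.lt_pow_succ_log_self (by norm_num : 1 < 2) a

section

variable {a x : ℕ}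

theorem gg_of_lt (hx : x < 2 ^ Nat.log 2 a) : gg a x = 2 * x := by
  simp [gg, bb, Nat.testBit_lt_two_pow hx]

theorem gg_of_two_pow_le (h₁ : 2 ^ Nat.log 2 a ≤ x) (h₂ : x ≤ a) :
    gg a x = 2 * (x - 2 ^ Nat.log 2 a) + 1 := by
  have hx : x < 2 ^ (Nat.log 2 a + 1) := by
    rw [pow_succ']
    exact h₂.trans_lt (Nat.lt_two_mul_two_pow_log a)
  rw [gg, bb, Nat.add_sub_cancel, if_pos ((Nat.testBit_iff_two_pow_le hx).mpr h₁), pow_succ']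
  omega

theorem gg_eq_ite (hx : x ≤ a) :
    gg a x = if x < 2 ^ Nat.log 2 a then 2 * x else 2 * (x - 2 ^ Nat.log 2 a) + 1 := by
  split_ifs with h
  · exact gg_of_lt h
  · exact gg_of_two_pow_le (not_lt.mp h) hx

theorem injOn_gg : Set.InjOn (gg a) (Set.Iic a) := by
  intro x (hx : x ≤ a) y (hy : y ≤ a) hxy
  -- the two branches of `g` take even and odd values respectively
  rw [gg_eq_ite hx, gg_eq_ite hy] at hxy
  split_ifs at hxy <;> omega

theorem Ma_subset_Iic : Ma a ⊆ Set.Iic a := fun _ hx => hx.2.1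

theorem finite_Ma : (Ma a).Finite := (Set.finite_Iic a).subset Ma_subset_Iic

theorem two_mul_mem_Ma_iff : 2 * x ∈ Ma a ↔ x ∈ Ma a ∧ 2 * x ≤ a := by
  simp only [Ma, Set.mem_ofPred_eq, Nat.exists_two_mul_eq_two_pow_iff]
  constructor
  · rintro ⟨h₀, h₁, h₂⟩
    exact ⟨⟨by omega, by omega, h₂⟩, h₁⟩
  · rintro ⟨⟨h₀, -, h₂⟩, h₁⟩
    exact ⟨by omega, h₁, h₂⟩

theorem gg_mem_Ma_of_two_pow_le (hx : x ∈ Ma a) (h : 2 ^ Nat.log 2 a ≤ x) : gg a x ∈ Ma a := by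
  obtain ⟨-, hxa, hx_pow⟩ := hx
  have hxN : x ≠ 2 ^ Nat.log 2 a := fun hxN => hx_pow ⟨_, hxN⟩
  have := Nat.lt_two_mul_two_pow_log a
  rw [gg_of_two_pow_le h hxa]
  refine ⟨by omega, by omega, ?_⟩
  rintro ⟨_ | k, hk⟩
  · omega
  · rw [pow_succ'] at hk; omega

theorem image_gg_sdiff_Ma (ha : a ≠ 0) :
    gg a '' Ma a \ Ma a = (2 * ·) '' Set.Ioo (a / 2) (2 ^ Nat.log 2 a) := by
  have hNa : 2 ^ Nat.log 2 a ≤ a := Nat.pow_log_le_self 2 ha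
  ext y
  constructor
  · rintro ⟨⟨x, hx, rfl⟩, hgx⟩
    rcases lt_or_ge x (2 ^ Nat.log 2 a) with h | h
    · rw [gg_of_lt h, two_mul_mem_Ma_iff] at hgx
      have h2x : ¬2 * x ≤ a := not_and.mp hgx hx
      exact ⟨x, ⟨by omega, h⟩, (gg_of_lt h).symm⟩
    · exact absurd (gg_mem_Ma_of_two_pow_le hx h) hgx
  · rintro ⟨x, ⟨h₁, h₂⟩, rfl⟩
    have hx : x ∈ Ma a := ⟨by omega, by omega, Nat.not_exists_eq_two_pow_of_lt_of_lt (by omega) h₂⟩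
    refine ⟨⟨x, hx, gg_of_lt h₂⟩, ?_⟩
    rw [two_mul_mem_Ma_iff]
    omega

theorem ncard_image_gg_sdiff_Ma (ha : a ≠ 0) :
    (gg a '' Ma a \ Ma a).ncard = 2 ^ Nat.log 2 a - a / 2 - 1 := by
  rw [image_gg_sdiff_Ma ha, Set.ncard_image_of_injective _ (mul_right_injective₀ two_ne_zero),
    ← Finset.coe_Ioo, Set.ncard_coe_finset, Nat.card_Ioo]

theorem two_pow_log_sub_div_two_sub_one_eq : 2 ^ Nat.log 2 a - a / 2 - 1 = (mm a - 1 + 1) / 2 := by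
  have := Nat.lt_two_mul_two_pow_log a
  rw [mm, bb, pow_succ']
  omega

end

theorem card_Ja_Ha_general (a : ℕ) (ha : 2 ≤ a) :
    (Ma a \ (gg a '' Ma a)).ncard = ((mm a - 1) + 1) / 2 ∧
    ((gg a '' Ma a) \ Ma a).ncard = ((mm a - 1) + 1) / 2 := by
  have hH : ((gg a '' Ma a) \ Ma a).ncard = (mm a - 1 + 1) / 2 := by
    rw [ncard_image_gg_sdiff_Ma (by omega), two_pow_log_sub_div_two_sub_one_eq]
  have hinj : Set.InjOn (gg a) (Ma a) := injOn_gg.mono Ma_subset_Iic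
  have hJH : (Ma a \ gg a '' Ma a).ncard = (gg a '' Ma a \ Ma a).ncard :=
    (Set.ncard_eq_ncard_iff_ncard_sdiff_eq_ncard_sdiff finite_Ma (finite_Ma.image _)).mp
      hinj.ncard_image.symm
  exact ⟨hJH.trans hH, hH⟩

/-- if `J_a = M_a \ g(M_a)` is nonempty, then
`|J_a| = |H_a| = ⌈(m-1)/2⌉` where `H_a = g(M_a) \ M_a`. -/
theorem card_Ja_Ha (a : ℕ) (ha : 2 ≤ a)
    (hJ : Ma a \ (gg a '' Ma a) ≠ ∅) :
    (Ma a \ (gg a '' Ma a)).ncard = ((mm a - 1) + 1) / 2 ∧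
    ((gg a '' Ma a) \ Ma a).ncard = ((mm a - 1) + 1) / 2 :=
  card_Ja_Ha_general a ha
end

section
/- The minimum Hamming distance of the F_2-linear code S = span(M_a') in F_2^a is exactly 3 (assuming M_a is nonempty, i.e., a ≥ 3). -/
open scoped Classical

/-! In 1-indexed coordinates, `h(x)` has a one at the position `f(x) ∈ M_a`, which is not a power
of two, and spells out the binary digits of `x` on the power-of-two positions. As `f` is injective
on `M_a`, a sum of `k` distinct generators keeps `k` ones off the powers of two, while on the powers
of two it spells out `y₁ ⊕ ⋯ ⊕ y_k`; so its weight is at least `k + ‖y₁ ⊕ ⋯ ⊕ y_k‖`. This is `≥ 3`: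
for `k = 1` because an element of `M_a` has two binary digits, for `k = 2` because distinct
numbers have nonzero XOR. The generator `h(3)` has weight exactly `3`. -/

open Finset

lemma Nat.testBit_sum_two_pow (s : Finset ℕ) (p : ℕ) : (∑ i ∈ s, 2 ^ i).testBit p ↔ p ∈ s := by
  rw [← Nat.mem_bitIndices, ← List.mem_toFinset, Finset.toFinset_bitIndices_sum_two_pow]

lemma Nat.testBit_eq_decide_two_pow_le {x k : ℕ} (hx : x < 2 ^ (k + 1)) :
    x.testBit k = decide (2 ^ k ≤ x) := by
  by_cases h : 2 ^ k ≤ x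
  · obtain ⟨r, rfl⟩ := Nat.exists_eq_add_of_le h
    rw [Nat.testBit_two_pow_add_eq, Nat.testBit_lt_two_pow (by rw [pow_succ] at hx; omega)]
    simp
  · rw [Nat.testBit_lt_two_pow (by omega)]
    simp [h]

lemma card_le_hammingNorm {β : Type*} [Zero β] [DecidableEq β] {n : ℕ} (v : Fin n → β)
    (P : Finset ℕ) (hP : ∀ p ∈ P, ∃ hp : p < n, v ⟨p, hp⟩ ≠ 0) : #P ≤ hammingNorm v :=
  card_le_card_of_surjOn Fin.val fun p hp =>
    let ⟨hpn, hv⟩ := hP p hp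
    ⟨⟨p, hpn⟩, by simpa using hv, rfl⟩

lemma card_bitIndices_le_hammingNorm_toVec {n x : ℕ} (hx : x < 2 ^ n) :
    #x.bitIndices.toFinset ≤ hammingNorm (toVec n x) :=
  card_le_hammingNorm _ _ fun p hp => by
    have hbit : x.testBit p := by simpa using hp
    refine ⟨?_, by simp [toVec, hbit]⟩
    exact (Nat.pow_lt_pow_iff_right (by norm_num)).1 ((Nat.ge_two_pow_of_testBit hbit).trans_lt hx)

lemma hammingNorm_toVec_le_card_bitIndices (n x : ℕ) :
    hammingNorm (toVec n x) ≤ #x.bitIndices.toFinset :=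
  card_le_card_of_injOn Fin.val (fun i hi => by simpa [toVec] using hi) Fin.val_injective.injOn

lemma toVec_injOn {n x y : ℕ} (hx : x < 2 ^ n) (hy : y < 2 ^ n) (h : toVec n x = toVec n y) :
    x = y := by
  refine Nat.eq_of_testBit_eq fun i => ?_
  by_cases hi : i < n
  · have := congrFun h ⟨i, hi⟩
    simp only [toVec] at this
    cases hxi : x.testBit i <;> cases hyi : y.testBit i <;> simp_all
  · have hn : 2 ^ n ≤ 2 ^ i := Nat.pow_le_pow_right (by norm_num) (by omega)
    rw [Nat.testBit_lt_two_pow (by omega), Nat.testBit_lt_two_pow (by omega)]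

lemma sum_toVec_apply {ι : Type*} (T : Finset ι) (N : ι → ℕ) {n : ℕ} (i : Fin n) :
    (∑ x ∈ T, toVec n (N x)) i = ∑ x ∈ T, if (N x).testBit i then 1 else 0 := by
  simp [toVec, Finset.sum_apply]

lemma exists_finset_sum_eq_of_mem_span_image {ι V : Type*} [AddCommGroup V] [Module (ZMod 2) V]
    {f : ι → V} {s : Set ι} {v : V} (hv : v ∈ Submodule.span (ZMod 2) (f '' s)) :
    ∃ T : Finset ι, ↑T ⊆ s ∧ ∑ i ∈ T, f i = v := by
  obtain ⟨l, hl, rfl⟩ := (Finsupp.mem_span_image_iff_linearCombination _).1 hv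
  refine ⟨l.support, hl, ?_⟩
  rw [Finsupp.linearCombination_apply, Finsupp.sum]
  refine sum_congr rfl fun i hi => ?_
  have hli : l i = 1 := Fin.eq_one_of_ne_zero (l i) (Finsupp.mem_support_iff.1 hi)
  rw [hli, one_smul]

lemma two_le_card_bitIndices {x : ℕ} (hx0 : x ≠ 0) (hxp : ¬∃ k, x = 2 ^ k) :
    2 ≤ #x.bitIndices.toFinset := by
  have hsum := Finset.sum_toFinset_bitIndices_two_pow x
  by_contra! h
  interval_cases hc : #x.bitIndices.toFinset
  · rw [card_eq_zero.1 hc, sum_empty] at hsum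
    exact hx0 hsum.symm
  · obtain ⟨k, hk⟩ := card_eq_one.1 hc
    rw [hk, sum_singleton] at hsum
    exact hxp ⟨k, hsum.symm⟩

section Bijection

variable {a x y : ℕ}

lemma two_pow_bb (a : ℕ) : 2 ^ bb a = 2 * 2 ^ (bb a - 1) := by
  simp [bb, pow_succ, mul_comm]

lemma two_pow_bb_pred_le (ha : a ≠ 0) : 2 ^ (bb a - 1) ≤ a := by
  simpa [bb] using Nat.pow_log_le_self 2 ha

lemma lt_two_pow_bb (a : ℕ) : a < 2 ^ bb a :=
  Nat.lt_pow_succ_log_self (by norm_num) a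

lemma ne_zero_of_mem_Ma (hx : x ∈ Ma a) : a ≠ 0 :=
  (hx.1.trans_le hx.2.1).ne'

lemma lt_two_pow_bb_of_mem_Ma (hx : x ∈ Ma a) : x < 2 ^ bb a :=
  hx.2.1.trans_lt (lt_two_pow_bb a)

lemma mm_add_add_one (a : ℕ) : mm a + a + 1 = 2 ^ bb a := by
  have := lt_two_pow_bb a
  unfold mm; omega

lemma mem_Ma_of_odd (hx : x % 2 = 1) (h3 : 3 ≤ x) (hxa : x ≤ a) : x ∈ Ma a := by
  refine ⟨by omega, hxa, ?_⟩
  rintro ⟨_ | k, rfl⟩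
  · omega
  · rw [pow_succ] at hx; omega

lemma two_mul_mem_Ma (hx : x ∈ Ma a) (h : 2 * x ≤ a) : 2 * x ∈ Ma a := by
  refine ⟨by linarith [hx.1], h, ?_⟩
  rintro ⟨_ | k, hk⟩
  · omega
  · exact hx.2.2 ⟨k, by rw [pow_succ] at hk; omega⟩

lemma gg_eq (hxa : x ≤ a) :
    gg a x = if 2 ^ (bb a - 1) ≤ x then 2 * x + 1 - 2 ^ bb a else 2 * x := by
  have hx : x < 2 ^ (bb a - 1 + 1) := by simpa [bb] using hxa.trans_lt (lt_two_pow_bb a)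
  simp [gg, Nat.testBit_eq_decide_two_pow_le hx]

lemma ff_mem_and_eq (hx : x ∈ Ma a) :
    ff a x ∈ Ma a ∧
      ((2 ^ (bb a - 1) ≤ x ∧ ff a x = 2 * x + 1 - 2 ^ bb a) ∨
        (2 * x ≤ a ∧ ff a x = 2 * x) ∨
        (x < 2 ^ (bb a - 1) ∧ a < 2 * x ∧ ff a x = 2 * x + 1 - 2 * ((mm a + 1) / 2))) := by
  have hc := two_pow_bb_pred_le (ne_zero_of_mem_Ma hx)
  obtain ⟨hx0, hxa, hxp⟩ := hx
  have h2c := two_pow_bb a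
  have hac := lt_two_pow_bb a
  have hm := mm_add_add_one a
  have hxc : x ≠ 2 ^ (bb a - 1) := fun h => hxp ⟨_, h⟩
  rw [ff, gg_eq hxa]
  split_ifs with h
  · have hmem : 2 * x + 1 - 2 ^ bb a ∈ Ma a := mem_Ma_of_odd (by omega) (by omega) (by omega)
    rw [ff', if_pos hmem]
    exact ⟨hmem, Or.inl ⟨h, rfl⟩⟩
  · by_cases h2x : 2 * x ≤ a
    · have hmem := two_mul_mem_Ma ⟨hx0, hxa, hxp⟩ h2x
      rw [ff', if_pos hmem]
      exact ⟨hmem, Or.inr (Or.inl ⟨h2x, rfl⟩)⟩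
    · rw [ff', if_neg fun hmem => h2x hmem.2.1]
      exact ⟨mem_Ma_of_odd (by omega) (by omega) (by omega),
        Or.inr (Or.inr ⟨by omega, by omega, rfl⟩)⟩

lemma ff_mem (hx : x ∈ Ma a) : ff a x ∈ Ma a :=
  (ff_mem_and_eq hx).1

lemma ff_injOn : Set.InjOn (ff a) (Ma a) := by
  intro x hx y hy h
  have hc := two_pow_bb_pred_le (ne_zero_of_mem_Ma hx)
  have h2c := two_pow_bb a
  have hm := mm_add_add_one a
  have hxa := hx.2.1
  have hya := hy.2.1
  rcases (ff_mem_and_eq hx).2 with ⟨hx1, hfx⟩ | ⟨hx1, hfx⟩ | ⟨hx1, hx2, hfx⟩ <;>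
    rcases (ff_mem_and_eq hy).2 with ⟨hy1, hfy⟩ | ⟨hy1, hfy⟩ | ⟨hy1, hy2, hfy⟩ <;>
    omega

end Bijection

section Encoding

variable {a x y : ℕ}

/-- `h(x)` stores digit `j < b - 1` of `x` at position `2^(j+1) - 1` and digit `b - 1` at
position `0`; in 1-indexed coordinates these are the powers of two `2^((j+1) mod b)`, exactly the
positions that `M_a` avoids. -/
def digitPos (a j : ℕ) : ℕ := 2 ^ ((j + 1) % bb a) - 1

lemma digitPos_lt (ha : a ≠ 0) (j : ℕ) : digitPos a j < a := by
  have hj : (j + 1) % bb a ≤ bb a - 1 := Nat.le_sub_one_of_lt (Nat.mod_lt _ (by simp [bb]))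
  have := Nat.pow_le_pow_right (show 0 < 2 by norm_num) hj
  have := two_pow_bb_pred_le ha
  have := Nat.one_le_two_pow (n := (j + 1) % bb a)
  unfold digitPos; omega

lemma digitPos_injOn : Set.InjOn (digitPos a) (Set.Iio (bb a)) := by
  intro i hi j hj h
  have := Nat.one_le_two_pow (n := (i + 1) % bb a)
  have := Nat.one_le_two_pow (n := (j + 1) % bb a)
  have hmod : i + 1 ≡ j + 1 [MOD bb a] :=
    Nat.pow_right_injective le_rfl (by dsimp only; unfold digitPos at h; omega)
  have := Nat.ModEq.add_right_cancel' 1 hmod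
  rwa [Nat.ModEq, Nat.mod_eq_of_lt hi, Nat.mod_eq_of_lt hj] at this

lemma digitPos_ne_pred (hy : y ∈ Ma a) (j : ℕ) : digitPos a j ≠ y - 1 := by
  have := Nat.one_le_two_pow (n := (j + 1) % bb a)
  have := hy.1
  exact fun h => hy.2.2 ⟨(j + 1) % bb a, by unfold digitPos at h; omega⟩

lemma hh_eq_sum (a x : ℕ) :
    hh a x = 2 ^ (ff a x - 1) + ∑ j ∈ range (bb a), bitv x j * 2 ^ digitPos a j := by
  have hb : bb a = bb a - 1 + 1 := by simp [bb]
  have hlast : digitPos a (bb a - 1) = 0 := by simp [digitPos, ← hb]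
  have hinit : ∀ j ∈ range (bb a - 1), digitPos a j = 2 ^ (j + 1) - 1 := fun j hj => by
    rw [digitPos, Nat.mod_eq_of_lt (by simp at hj; omega)]
  conv_rhs => rw [hb, sum_range_succ, hlast, sum_congr rfl fun j hj => by rw [hinit j hj]]
  rw [hh, pow_zero, mul_one, add_assoc]

lemma hh_eq_sum_two_pow (hx : x ∈ Ma a) :
    hh a x = ∑ p ∈ insert (ff a x - 1) (((range (bb a)).filter (x.testBit ·)).image (digitPos a)),
      2 ^ p := by
  have hinj : Set.InjOn (digitPos a) ((range (bb a)).filter (x.testBit ·)) :=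
    digitPos_injOn.mono fun j hj => (mem_range.1 (mem_filter.1 hj).1)
  rw [sum_insert, sum_image hinj, sum_filter, hh_eq_sum]
  · simp [bitv]
  · simp only [mem_image]
    rintro ⟨j, -, hj⟩
    exact digitPos_ne_pred (ff_mem hx) j hj

lemma testBit_hh (hx : x ∈ Ma a) (p : ℕ) :
    (hh a x).testBit p ↔ p = ff a x - 1 ∨ ∃ j < bb a, x.testBit j ∧ digitPos a j = p := by
  rw [hh_eq_sum_two_pow hx, Nat.testBit_sum_two_pow]
  simp [and_assoc]

lemma testBit_hh_ff_pred (hx : x ∈ Ma a) (hy : y ∈ Ma a) :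
    (hh a x).testBit (ff a y - 1) ↔ x = y := by
  have := (ff_mem hx).1
  have := (ff_mem hy).1
  rw [testBit_hh hx]
  constructor
  · rintro (h | ⟨j, -, -, h⟩)
    · exact ff_injOn hx hy (by omega)
    · exact absurd h (digitPos_ne_pred (ff_mem hy) j)
  · rintro rfl
    exact Or.inl rfl

lemma testBit_hh_digitPos (hx : x ∈ Ma a) {j : ℕ} (hj : j < bb a) :
    (hh a x).testBit (digitPos a j) = x.testBit j := by
  rw [Bool.eq_iff_iff, testBit_hh hx]
  constructor
  · rintro (h | ⟨i, hi, hxi, h⟩)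
    · exact absurd h (digitPos_ne_pred (ff_mem hx) j)
    · rwa [← digitPos_injOn hi hj h]
  · exact fun h => Or.inr ⟨j, hj, h, rfl⟩

end Encoding

section Weight

variable {a x : ℕ}

theorem card_add_hammingNorm_le_hammingNorm_sum_toVec_hh {T : Finset ℕ} (hT : ↑T ⊆ Ma a) :
    #T + hammingNorm (∑ x ∈ T, toVec (bb a) x) ≤ hammingNorm (∑ x ∈ T, toVec a (hh a x)) := by
  rcases T.eq_empty_or_nonempty with rfl | ⟨x₀, hx₀⟩
  · simp
  have ha := ne_zero_of_mem_Ma (hT hx₀)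
  set w := ∑ x ∈ T, toVec (bb a) x
  set digits := univ.filter (w · ≠ 0)
  have hff : Set.InjOn (ff a · - 1) T := fun x hx y hy h => by
    have := (ff_mem (hT hx)).1
    have := (ff_mem (hT hy)).1
    exact ff_injOn (hT hx) (hT hy) (by simp only at h; omega)
  have hdigit : Set.InjOn (fun j : Fin (bb a) => digitPos a j) digits :=
    fun i _ j _ h => Fin.ext (digitPos_injOn i.isLt j.isLt h)
  have hdisj :
      Disjoint (T.image (ff a · - 1)) (digits.image fun j : Fin (bb a) => digitPos a j) := by
    simp only [disjoint_left, mem_image]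
    rintro _ ⟨x, hx, rfl⟩ ⟨j, -, h⟩
    exact digitPos_ne_pred (ff_mem (hT hx)) j h
  calc #T + hammingNorm w
      = #(T.image (ff a · - 1) ∪ digits.image fun j : Fin (bb a) => digitPos a j) := by
        rw [card_union_of_disjoint hdisj, card_image_of_injOn hff, card_image_of_injOn hdigit]
        rfl
    _ ≤ _ := card_le_hammingNorm _ _ ?_
  simp only [mem_union, mem_image]
  rintro p (⟨y, hy, rfl⟩ | ⟨j, hj, rfl⟩)
  · have := (ff_mem (hT hy)).1
    have := (ff_mem (hT hy)).2.1
    have hcoord : ∀ x ∈ T, (if (hh a x).testBit (ff a y - 1) then (1 : ZMod 2) else 0) =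
        if x = y then 1 else 0 := fun x hx => by simp only [testBit_hh_ff_pred (hT hx) (hT hy)]
    refine ⟨by omega, ?_⟩
    rw [sum_toVec_apply, Fin.val_mk, sum_congr rfl hcoord, sum_ite_eq', if_pos hy]
    exact one_ne_zero
  · have hcoord : ∀ x ∈ T, (if (hh a x).testBit (digitPos a j) then (1 : ZMod 2) else 0) =
        if x.testBit j then 1 else 0 := fun x hx => by rw [testBit_hh_digitPos (hT hx) j.isLt]
    refine ⟨digitPos_lt ha j, ?_⟩
    rw [sum_toVec_apply, Fin.val_mk, sum_congr rfl hcoord]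
    exact (sum_toVec_apply T id j).symm.trans_ne (mem_filter.1 hj).2

theorem three_le_hammingNorm_sum_toVec_hh {T : Finset ℕ} (hT : ↑T ⊆ Ma a) (hTne : T.Nonempty) :
    3 ≤ hammingNorm (∑ x ∈ T, toVec a (hh a x)) := by
  refine le_trans ?_ (card_add_hammingNorm_le_hammingNorm_sum_toVec_hh hT)
  obtain hT1 | hT2 | hT3 : #T = 1 ∨ #T = 2 ∨ 3 ≤ #T := by have := hTne.card_pos; omega
  · obtain ⟨x, rfl⟩ := card_eq_one.1 hT1
    have hx : x ∈ Ma a := hT (mem_singleton_self x)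
    have := (two_le_card_bitIndices hx.1.ne' hx.2.2).trans
      (card_bitIndices_le_hammingNorm_toVec (lt_two_pow_bb_of_mem_Ma hx))
    rw [sum_singleton]
    omega
  · obtain ⟨x, y, hxy, rfl⟩ := card_eq_two.1 hT2
    have hx : x ∈ Ma a := hT (by simp)
    have hy : y ∈ Ma a := hT (by simp)
    have hne : toVec (bb a) x + toVec (bb a) y ≠ 0 := fun h => hxy <|
      toVec_injOn (lt_two_pow_bb_of_mem_Ma hx) (lt_two_pow_bb_of_mem_Ma hy)
        ((eq_neg_of_add_eq_zero_left h).trans (ZModModule.neg_eq_self _))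
    have := hammingNorm_pos_iff.2 hne
    rw [sum_pair hxy]
    omega
  · omega

lemma hammingNorm_toVec_hh (hx : x ∈ Ma a) :
    hammingNorm (toVec a (hh a x)) = #x.bitIndices.toFinset + 1 := by
  refine le_antisymm ?_ ?_
  · calc hammingNorm (toVec a (hh a x))
        ≤ #(insert (ff a x - 1) (((range (bb a)).filter (x.testBit ·)).image (digitPos a))) := by
          simpa [hh_eq_sum_two_pow hx] using hammingNorm_toVec_le_card_bitIndices a (hh a x)
      _ ≤ #(((range (bb a)).filter (x.testBit ·)).image (digitPos a)) + 1 := card_insert_le _ _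
      _ ≤ #((range (bb a)).filter (x.testBit ·)) + 1 := by grw [card_image_le]
      _ ≤ #x.bitIndices.toFinset + 1 := by gcongr; intro j; simp
  · have hlower := card_add_hammingNorm_le_hammingNorm_sum_toVec_hh (T := {x}) (by simpa using hx)
    have hdigits := card_bitIndices_le_hammingNorm_toVec (lt_two_pow_bb_of_mem_Ma hx)
    simp only [card_singleton, sum_singleton] at hlower
    omega

end Weight

/-- the minimum Hamming distance of the linear code
`S = span_{F_2}(M_a') ⊆ F_2^a` is exactly `3`. -/
theorem min_distance_S_eq_three (a : ℕ) (ha : 3 ≤ a) :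
    (∀ v ∈ Ssub a, v ≠ 0 → 3 ≤ hammingNorm v) ∧
    (∃ v ∈ Ssub a, v ≠ 0 ∧ hammingNorm v = 3) := by
  have hspan : Ssub a = Submodule.span (ZMod 2) ((fun x => toVec a (hh a x)) '' Ma a) := by
    rw [Ssub, Set.image_image]
  refine ⟨fun v hv hv0 => ?_, ?_⟩
  · rw [hspan] at hv
    obtain ⟨T, hT, rfl⟩ := exists_finset_sum_eq_of_mem_span_image hv
    exact three_le_hammingNorm_sum_toVec_hh hT (nonempty_of_sum_ne_zero hv0)
  · have h3 : 3 ∈ Ma a := mem_Ma_of_odd rfl le_rfl ha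
    have hnorm : hammingNorm (toVec a (hh a 3)) = 3 := by
      rw [hammingNorm_toVec_hh h3]
      decide
    refine ⟨_, hspan ▸ Submodule.subset_span ⟨3, h3, rfl⟩, ?_, hnorm⟩
    exact hammingNorm_ne_zero_iff.1 (by omega)
end
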